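/- arXiv:2102.08246 — 3 statements merged into one kernel-verified Lean document; each statement's English description precedes it below -/
import Mathlib

section
/- Let μ, m ≥ 0 and let positive reals (M_k)_{k≥1} and (α_k)_{k≥1}, (A_k)_{k≥0} satisfy A_0 = 0, A_{k+1} = A_k + α_{k+1}, and A_{k+1}(1 + A_k(μ + m)) = M_{k+1} α_{k+1}², where α_{k+1} is the largest root of this quadratic. Then for all N ≥ 1: A_N ≥ max{ (1/4)(Σ_{k=0}^{N−1} M_{k+1}^{−1/2})², (1/M_1) Π_{k=1}^{N−1} (1 + √((μ+m)/(4M_{k+1})))² }. -/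
private lemma sq_le_imp {x y : ℝ} (hx : 0 ≤ x) (hy : 0 ≤ y) (h : x ^ 2 ≤ y ^ 2) : x ≤ y := by
  nlinarith

private lemma step1 (sa sb sM : ℝ) (hsa0 : 0 ≤ sa) (hsb0 : 0 < sb) (hsM0 : 0 < sM)
    (hsasb : sa ≤ sb) (h2 : sb ≤ sM * (sb ^ 2 - sa ^ 2)) : sa + 1 / (2 * sM) ≤ sb := by
  have h : 1 / (2 * sM) ≤ sb - sa := by
    rw [div_le_iff₀ (by positivity)]
    nlinarith [mul_nonneg (mul_nonneg hsM0.le (sub_nonneg.2 hsasb)) (sub_nonneg.2 hsasb)]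
  linarith

private lemma step2 (sa sb t : ℝ) (hsa0 : 0 ≤ sa) (hsb0 : 0 < sb) (ht0 : 0 ≤ t)
    (hsasb : sa ≤ sb) (h2 : 2 * t * sa * sb ≤ sb ^ 2 - sa ^ 2) : sa * (1 + t) ≤ sb := by
  nlinarith [sq_nonneg (sb - sa)]


theorem stmt4 (μ m : ℝ) (hμ : 0 ≤ μ) (hm : 0 ≤ m)
    (M α A : ℕ → ℝ) (hM : ∀ k, 0 < M (k + 1)) (hαpos : ∀ k, 0 < α (k + 1))
    (hA0 : A 0 = 0) (hArec : ∀ k, A (k + 1) = A k + α (k + 1))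
    (heq : ∀ k, A (k + 1) * (1 + A k * (μ + m)) = M (k + 1) * α (k + 1) ^ 2)
    -- α_{k+1} is the largest root of the quadratic
    (hlargest : ∀ k, ∀ β : ℝ,
      M (k + 1) * β ^ 2 = (A k + β) * (1 + A k * (μ + m)) → β ≤ α (k + 1)) :
    ∀ N : ℕ, 1 ≤ N →
      A N ≥ max
        (1 / 4 * (∑ k ∈ Finset.range N, 1 / Real.sqrt (M (k + 1))) ^ 2)
        (1 / M 1 * ∏ k ∈ Finset.Icc 1 (N - 1),
          (1 + Real.sqrt ((μ + m) / (4 * M (k + 1)))) ^ 2) := by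
  set q := μ + m with hqdef
  have hq0 : 0 ≤ q := by positivity
  -- positivity / monotonicity of A
  have hApos : ∀ k, 0 ≤ A k ∧ 0 < A (k + 1) := by
    intro k
    induction k with
    | zero =>
      refine ⟨hA0.ge, ?_⟩
      rw [hArec, hA0]; simpa using hαpos 0
    | succ n ih =>
      refine ⟨ih.2.le, ?_⟩
      rw [hArec]; have := hαpos (n + 1); linarith [ih.2]
  have hAnn : ∀ k, 0 ≤ A k := fun k => (hApos k).1
  have hmono : ∀ k, A k < A (k + 1) := by
    intro k; rw [hArec]; linarith [hαpos k]
  -- the key per-step inequalities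
  have key : ∀ k, Real.sqrt (A k) + 1 / (2 * Real.sqrt (M (k + 1))) ≤ Real.sqrt (A (k + 1))
      ∧ Real.sqrt (A k) * (1 + Real.sqrt (q / (4 * M (k + 1)))) ≤ Real.sqrt (A (k + 1)) := by
    intro k
    have hMk : (0:ℝ) < M (k + 1) := hM k
    have ha : 0 ≤ A k := hAnn k
    have hb : 0 < A (k + 1) := (hApos k).2
    have hab : A k < A (k + 1) := hmono k
    have hα : α (k + 1) = A (k + 1) - A k := by have := hArec k; linarith
    have heqk : M (k + 1) * (A (k + 1) - A k) ^ 2 = A (k + 1) * (1 + A k * q) := by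
      rw [← hα]; exact (heq k).symm
    set a := A k
    set b := A (k + 1)
    set sa := Real.sqrt a with hsa
    set sb := Real.sqrt b with hsb
    set sM := Real.sqrt (M (k + 1)) with hsM
    have hsa2 : sa ^ 2 = a := Real.sq_sqrt ha
    have hsb2 : sb ^ 2 = b := Real.sq_sqrt hb.le
    have hsM2 : sM ^ 2 = M (k + 1) := Real.sq_sqrt hMk.le
    have hsa0 : 0 ≤ sa := Real.sqrt_nonneg _
    have hsb0 : 0 < sb := Real.sqrt_pos.2 hb
    have hsM0 : 0 < sM := Real.sqrt_pos.2 hMk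
    have hsasb : sa ≤ sb := Real.sqrt_le_sqrt hab.le
    have hba : (0:ℝ) ≤ b - a := by linarith
    constructor
    · -- first inequality
      have h1 : b ≤ M (k + 1) * (b - a) ^ 2 := by nlinarith [mul_nonneg ha hq0]
      have h2 : sb ≤ sM * (b - a) := by
        refine sq_le_imp hsb0.le (mul_nonneg hsM0.le hba) ?_
        rw [mul_pow, hsM2, hsb2]; exact h1
      exact step1 sa sb sM hsa0 hsb0 hsM0 hsasb (by rw [hsa2, hsb2]; exact h2)
    · -- second inequality
      set t := Real.sqrt (q / (4 * M (k + 1))) with ht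
      have ht0 : 0 ≤ t := Real.sqrt_nonneg _
      have ht2 : t ^ 2 = q / (4 * M (k + 1)) := Real.sq_sqrt (by positivity)
      have hq4 : q = 4 * M (k + 1) * t ^ 2 := by field_simp at ht2; linarith
      have hX : M (k + 1) * ((b - a) ^ 2 - 4 * t ^ 2 * (a * b)) = b := by
        linear_combination heqk + a * b * hq4
      have hX0 : (0:ℝ) ≤ (b - a) ^ 2 - 4 * t ^ 2 * (a * b) := by nlinarith [hX, hMk, hb]
      have h2 : 2 * t * sa * sb ≤ b - a := by
        refine sq_le_imp (by positivity) hba ?_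
        have hsq : (2 * t * sa * sb) ^ 2 = 4 * t ^ 2 * (a * b) := by
          rw [← hsa2, ← hsb2]; ring
        rw [hsq]; linarith
      exact step2 sa sb t hsa0 hsb0 ht0 hsasb (by rw [hsa2, hsb2]; exact h2)
  -- A 1 = 1 / M 1
  have hA1 : A 1 = 1 / M 1 := by
    have h0 := heq 0
    rw [hA0] at h0
    have hα0 : α 1 = A 1 := by have := hArec 0; rw [hA0] at this; linarith
    rw [hα0] at h0
    have hA1pos : 0 < A 1 := (hApos 0).2
    have hM1 : 0 < M 1 := hM 0
    field_simp
    nlinarith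
  -- first bound via sum
  have hsum : ∀ n : ℕ, (∑ k ∈ Finset.range n, 1 / (2 * Real.sqrt (M (k + 1)))) ≤ Real.sqrt (A n) := by
    intro n
    induction n with
    | zero => simp [hA0]
    | succ n ih =>
      rw [Finset.sum_range_succ]
      calc (∑ k ∈ Finset.range n, 1 / (2 * Real.sqrt (M (k + 1)))) + 1 / (2 * Real.sqrt (M (n + 1)))
          ≤ Real.sqrt (A n) + 1 / (2 * Real.sqrt (M (n + 1))) := by linarith
        _ ≤ Real.sqrt (A (n + 1)) := (key n).1
  -- second bound via product
  have hprod : ∀ n : ℕ, 1 ≤ n →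
      Real.sqrt (1 / M 1) * ∏ k ∈ Finset.Icc 1 (n - 1), (1 + Real.sqrt (q / (4 * M (k + 1))))
        ≤ Real.sqrt (A n) := by
    intro n hn
    induction n with
    | zero => omega
    | succ n ih =>
      rcases Nat.eq_or_lt_of_le hn with h | h
      · -- n + 1 = 1, so n = 0
        have hn0 : n = 0 := by omega
        subst hn0
        simp [hA1]
      · have hn1 : 1 ≤ n := by omega
        have ihn := ih hn1
        have hstep := (key n).2
        have hprodnn : 0 ≤ ∏ k ∈ Finset.Icc 1 (n - 1), (1 + Real.sqrt (q / (4 * M (k + 1)))) :=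
          Finset.prod_nonneg fun i _ => by positivity
        have hIcc : Finset.Icc 1 (n + 1 - 1) = Finset.Icc 1 n := by norm_num
        rw [hIcc]
        have hsplit : (∏ k ∈ Finset.Icc 1 n, (1 + Real.sqrt (q / (4 * M (k + 1)))))
            = (∏ k ∈ Finset.Icc 1 (n - 1), (1 + Real.sqrt (q / (4 * M (k + 1)))))
              * (1 + Real.sqrt (q / (4 * M (n + 1)))) := by
          have : n = (n - 1) + 1 := by omega
          rw [this, Finset.prod_Icc_succ_top (by omega)]
          congr 2 <;> omega
        rw [hsplit]
        have hfac : 0 ≤ 1 + Real.sqrt (q / (4 * M (n + 1))) := by positivity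
        calc Real.sqrt (1 / M 1) * ((∏ k ∈ Finset.Icc 1 (n - 1), (1 + Real.sqrt (q / (4 * M (k + 1)))))
              * (1 + Real.sqrt (q / (4 * M (n + 1)))))
            = (Real.sqrt (1 / M 1) * ∏ k ∈ Finset.Icc 1 (n - 1), (1 + Real.sqrt (q / (4 * M (k + 1)))))
              * (1 + Real.sqrt (q / (4 * M (n + 1)))) := by ring
          _ ≤ Real.sqrt (A n) * (1 + Real.sqrt (q / (4 * M (n + 1)))) :=
              mul_le_mul_of_nonneg_right ihn hfac
          _ ≤ Real.sqrt (A (n + 1)) := hstep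
  intro N hN
  rw [ge_iff_le, max_le_iff]
  constructor
  · -- sum bound
    have h := hsum N
    have hSnn : 0 ≤ ∑ k ∈ Finset.range N, 1 / (2 * Real.sqrt (M (k + 1))) :=
      Finset.sum_nonneg fun i _ => by positivity
    have hsq : (∑ k ∈ Finset.range N, 1 / (2 * Real.sqrt (M (k + 1)))) ^ 2 ≤ A N := by
      calc (∑ k ∈ Finset.range N, 1 / (2 * Real.sqrt (M (k + 1)))) ^ 2
          ≤ Real.sqrt (A N) ^ 2 := by nlinarith [Real.sqrt_nonneg (A N)]
        _ = A N := Real.sq_sqrt (hAnn N)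
    have heqsum : (∑ k ∈ Finset.range N, 1 / (2 * Real.sqrt (M (k + 1))))
        = (1 / 2) * ∑ k ∈ Finset.range N, 1 / Real.sqrt (M (k + 1)) := by
      rw [Finset.mul_sum]
      refine Finset.sum_congr rfl fun i _ => ?_
      ring
    rw [heqsum] at hsq
    nlinarith [hsq]
  · -- product bound
    have h := hprod N hN
    have hM1 : 0 < M 1 := hM 0
    have hPnn : 0 ≤ ∏ k ∈ Finset.Icc 1 (N - 1), (1 + Real.sqrt (q / (4 * M (k + 1)))) :=
      Finset.prod_nonneg fun i _ => by positivity
    have hLnn : 0 ≤ Real.sqrt (1 / M 1) * ∏ k ∈ Finset.Icc 1 (N - 1), (1 + Real.sqrt (q / (4 * M (k + 1)))) := by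
      positivity
    have hsq : (Real.sqrt (1 / M 1) * ∏ k ∈ Finset.Icc 1 (N - 1), (1 + Real.sqrt (q / (4 * M (k + 1))))) ^ 2
        ≤ A N := by
      calc (Real.sqrt (1 / M 1) * ∏ k ∈ Finset.Icc 1 (N - 1), (1 + Real.sqrt (q / (4 * M (k + 1))))) ^ 2
          ≤ Real.sqrt (A N) ^ 2 := by nlinarith [Real.sqrt_nonneg (A N)]
        _ = A N := Real.sq_sqrt (hAnn N)
    have hexpand : (Real.sqrt (1 / M 1) * ∏ k ∈ Finset.Icc 1 (N - 1), (1 + Real.sqrt (q / (4 * M (k + 1))))) ^ 2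
        = 1 / M 1 * ∏ k ∈ Finset.Icc 1 (N - 1), (1 + Real.sqrt (q / (4 * M (k + 1)))) ^ 2 := by
      rw [mul_pow, Real.sq_sqrt (by positivity : (0:ℝ) ≤ 1 / M 1), ← Finset.prod_pow]
    rw [hexpand] at hsq
    exact hsq
end

section
/- Let φ be μ_φ-strongly convex, L_φ-smooth, with H-Lipschitz Hessian: ‖∇²φ(x) − ∇²φ(y)‖ ≤ H‖x−y‖. Let x_{k+1} = (α_{k+1}u_{k+1} + A_k x_k)/A_{k+1} and y_{k+1} = (α_{k+1}u_k + A_k x_k)/A_{k+1} with A_{k+1} = A_k + α_{k+1}. Then D_φ[x_{k+1}](y_{k+1}) ≤ (α_{k+1}²/A_{k+1}²) D_φ[u_k](u_{k+1}) (1 + H d_k / μ_φ), where d_k = ‖x_{k+1} − y_{k+1}‖ + ‖u_k − x_k‖ + ‖u_k − u_{k+1}‖. -/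
open RealInnerProductSpace

open Set in
lemma mvt2 (g : ℝ → ℝ) (hg : ContDiff ℝ 2 g) :
    ∃ τ ∈ Set.Icc (0:ℝ) 1, g 1 - g 0 - deriv g 0 = deriv (deriv g) τ / 2 := by
  have hg2 : ContDiff ℝ (1 + 1) g := by norm_num; exact hg
  have hdg : ContDiff ℝ 1 (deriv g) := (contDiff_succ_iff_deriv.mp hg2).2.2
  have hd : Differentiable ℝ g := hg.differentiable two_ne_zero
  have hdd : Differentiable ℝ (deriv g) := hdg.differentiable one_ne_zero
  have hu : UniqueDiffOn ℝ (Icc (0:ℝ) 1) := uniqueDiffOn_Icc zero_lt_one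
  have hf : ContDiffOn ℝ 1 g (Icc 0 1) := (hg.of_le one_le_two).contDiffOn
  have h1 : ∀ t ∈ Icc (0:ℝ) 1, iteratedDerivWithin 1 g (Icc 0 1) t = deriv g t := by
    intro t ht
    rw [iteratedDerivWithin_one]
    exact (hd t).derivWithin (hu t ht)
  have hf' : DifferentiableOn ℝ (iteratedDerivWithin 1 g (Icc 0 1)) (Ioo 0 1) := by
    intro t ht
    exact (hdd t).differentiableWithinAt.congr (fun y hy => h1 y (Ioo_subset_Icc_self hy))
      (h1 t (Ioo_subset_Icc_self ht))
  obtain ⟨τ, hτ, heq⟩ := taylor_mean_remainder_lagrange (n := 1) (x₀ := 0) (x := 1) zero_ne_one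
    (by rw [uIcc_of_le zero_le_one]; exact_mod_cast hf)
    (by rw [uIcc_of_le zero_le_one, uIoo_of_le zero_le_one]; exact hf')
  rw [uIoo_of_le zero_le_one] at hτ
  rw [uIcc_of_le zero_le_one] at heq
  refine ⟨τ, Ioo_subset_Icc_self hτ, ?_⟩
  have htay : taylorWithinEval g 1 (Icc 0 1) 0 1 = g 0 + deriv g 0 := by
    simp [taylor_within_apply, Finset.sum_range_succ, h1 0 (by norm_num)]
  have h2 : iteratedDerivWithin 2 g (Icc 0 1) τ = deriv (deriv g) τ := by
    have hnhds : Icc (0:ℝ) 1 ∈ nhds τ := Icc_mem_nhds hτ.1 hτ.2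
    rw [iteratedDerivWithin_succ]
    rw [derivWithin_of_mem_nhds hnhds]
    apply Filter.EventuallyEq.deriv_eq
    filter_upwards [hnhds] with y hy
    exact h1 y hy
  rw [htay] at heq
  norm_num [Nat.factorial] at heq
  rw [h2] at heq
  linarith

/-- Bregman divergence `D_φ[y](x) = φ(x) − φ(y) − ⟪∇φ(y), x − y⟫`. -/
noncomputable def breg {E : Type*} [NormedAddCommGroup E] [InnerProductSpace ℝ E]
    [CompleteSpace E] (φ : E → ℝ) (y x : E) : ℝ :=
  φ x - φ y - ⟪gradient φ y, x - y⟫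

lemma grad_inner {E : Type*} [NormedAddCommGroup E] [InnerProductSpace ℝ E]
    [CompleteSpace E] (φ : E → ℝ) (x v : E) :
    ⟪gradient φ x, v⟫ = fderiv ℝ φ x v := by
  simp [gradient, InnerProductSpace.toDual_symm_apply]

lemma grad_contDiff {E : Type*} [NormedAddCommGroup E] [InnerProductSpace ℝ E]
    [CompleteSpace E] (φ : E → ℝ) (hφ : ContDiff ℝ 2 φ) :
    ContDiff ℝ 1 (gradient φ) := by
  have h : ContDiff ℝ 1 (fderiv ℝ φ) := hφ.fderiv_right (by norm_num)
  exact ((InnerProductSpace.toDual ℝ E).symm.contDiff).comp h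

lemma breg_mvt {E : Type*} [NormedAddCommGroup E] [InnerProductSpace ℝ E]
    [CompleteSpace E] (φ : E → ℝ) (hφ : ContDiff ℝ 2 φ) (a b : E) :
    ∃ τ ∈ Set.Icc (0:ℝ) 1, breg φ a b =
      1/2 * ⟪(fderiv ℝ (gradient φ) (a + τ • (b - a))) (b - a), b - a⟫ := by
  set v := b - a with hv
  set L : ℝ → E := fun t => a + t • v with hLdef
  have hLc : ContDiff ℝ 2 L := contDiff_const.add (contDiff_id.smul contDiff_const)
  have hL : ∀ t : ℝ, HasDerivAt L v t := by
    intro t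
    simpa [hLdef] using ((hasDerivAt_id t).smul_const v).const_add a
  set g : ℝ → ℝ := fun t => φ (L t) with hgdef
  have hg : ContDiff ℝ 2 g := hφ.comp hLc
  have hgd : ∀ t, HasDerivAt g (⟪gradient φ (L t), v⟫) t := by
    intro t
    have := ((hφ.differentiable two_ne_zero) (L t)).hasFDerivAt.comp_hasDerivAt t (hL t)
    rwa [grad_inner]
  have hderiv : deriv g = fun t => ⟪gradient φ (L t), v⟫ := funext fun t => (hgd t).deriv
  have hG : ContDiff ℝ 1 (gradient φ) := grad_contDiff φ hφ
  have hgd2 : ∀ t : ℝ, HasDerivAt (fun t => ⟪gradient φ (L t), v⟫)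
      (⟪(fderiv ℝ (gradient φ) (L t)) v, v⟫) t := by
    intro t
    have h1 : HasDerivAt (fun t => gradient φ (L t)) ((fderiv ℝ (gradient φ) (L t)) v) t :=
      ((hG.differentiable one_ne_zero) (L t)).hasFDerivAt.comp_hasDerivAt t (hL t)
    simpa using h1.inner ℝ (hasDerivAt_const t v)
  obtain ⟨τ, hτ, heq⟩ := mvt2 g hg
  refine ⟨τ, hτ, ?_⟩
  have hd2 : deriv (deriv g) τ = ⟪(fderiv ℝ (gradient φ) (L τ)) v, v⟫ := by
    rw [hderiv]; exact (hgd2 τ).deriv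
  have hg1 : g 1 = φ b := by simp [hgdef, hLdef, hv]
  have hg0 : g 0 = φ a := by simp [hgdef, hLdef]
  have hd0 : deriv g 0 = ⟪gradient φ a, v⟫ := by rw [hderiv]; simp [hLdef]
  have : breg φ a b = g 1 - g 0 - deriv g 0 := by rw [hg1, hg0, hd0]; rfl
  rw [this, heq, hd2]
  ring
theorem stmt8 {E : Type*} [NormedAddCommGroup E] [InnerProductSpace ℝ E] [CompleteSpace E]
    (φ : E → ℝ) (hφ : ContDiff ℝ 2 φ) (μφ Lφ H : ℝ)
    (hμ : 0 < μφ) (hLφ : 0 < Lφ) (hH : 0 ≤ H)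
    -- φ is μ_φ-strongly convex and L_φ-smooth
    (hstrong : ∀ a b : E, breg φ a b ≥ μφ / 2 * ‖b - a‖ ^ 2)
    (hsmooth : ∀ a b : E, breg φ a b ≤ Lφ / 2 * ‖b - a‖ ^ 2)
    -- the Hessian of φ is H-Lipschitz continuous
    (hHess : ∀ a b : E, ‖fderiv ℝ (gradient φ) a - fderiv ℝ (gradient φ) b‖ ≤ H * ‖a - b‖)
    (xk xk1 yk1 uk uk1 : E) (αk1 Ak Ak1 : ℝ)
    (hαpos : 0 < αk1) (hAk : 0 ≤ Ak) (hA : Ak1 = Ak + αk1)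
    (hy : yk1 = Ak1⁻¹ • (αk1 • uk + Ak • xk))
    (hx : xk1 = Ak1⁻¹ • (αk1 • uk1 + Ak • xk)) :
    breg φ xk1 yk1 ≤ αk1 ^ 2 / Ak1 ^ 2 * breg φ uk uk1 *
      (1 + H * (‖xk1 - yk1‖ + ‖uk - xk‖ + ‖uk - uk1‖) / μφ) := by
  subst hA
  have hA1 : 0 < Ak + αk1 := by linarith
  set Ak1 : ℝ := Ak + αk1 with hA
  have hA1' : Ak1 ≠ 0 := hA1.ne'
  set r : ℝ := αk1 / Ak1 with hrdef
  have hr : 0 < r := div_pos hαpos hA1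
  set w : E := uk - uk1 with hwdef
  -- key vector identities
  have hxy : yk1 - xk1 = r • w := by
    rw [hx, hy, hrdef, hwdef, div_eq_mul_inv]
    match_scalars <;> ring
  have hyu : yk1 - uk = (Ak / Ak1) • (xk - uk) := by
    rw [hy, div_eq_mul_inv]
    match_scalars <;> (field_simp; try ring)
  clear_value Ak1 r w
  obtain ⟨τ, hτ, h₁⟩ := breg_mvt φ hφ xk1 yk1
  obtain ⟨σ, hσ, h₂⟩ := breg_mvt φ hφ uk uk1
  set ξ : E := xk1 + τ • (yk1 - xk1) with hξdef
  set η : E := uk + σ • (uk1 - uk) with hηdef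
  set B := fderiv ℝ (gradient φ) with hBdef
  -- breg φ xk1 yk1 = r^2 * (1/2) ⟪B ξ w, w⟫
  have e₁ : breg φ xk1 yk1 = r ^ 2 * (1/2 * ⟪B ξ w, w⟫) := by
    rw [h₁, hxy]
    rw [map_smul, real_inner_smul_left, real_inner_smul_right]
    ring
  have e₂ : breg φ uk uk1 = 1/2 * ⟪B η w, w⟫ := by
    rw [h₂]
    have : uk1 - uk = -w := by rw [hwdef]; abel
    rw [this, map_neg, inner_neg_neg]
  set d : ℝ := ‖xk1 - yk1‖ + ‖uk - xk‖ + ‖uk - uk1‖ with hddef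
  clear_value ξ η B d
  have hd0 : 0 ≤ d := by rw [hddef]; positivity
  -- distance between the two mean-value points
  have hsep : ‖ξ - η‖ ≤ d := by
    rw [hddef]
    have hdecomp : ξ - η = (1 - τ) • (xk1 - yk1) + (yk1 - uk) + σ • (uk - uk1) := by
      rw [hξdef, hηdef]
      match_scalars <;> ring
    calc ‖ξ - η‖ ≤ ‖(1 - τ) • (xk1 - yk1) + (yk1 - uk)‖ + ‖σ • (uk - uk1)‖ := by
          rw [hdecomp]; exact norm_add_le _ _
      _ ≤ ‖(1 - τ) • (xk1 - yk1)‖ + ‖yk1 - uk‖ + ‖σ • (uk - uk1)‖ := by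
          gcongr; exact norm_add_le _ _
      _ ≤ 1 * ‖xk1 - yk1‖ + ‖yk1 - uk‖ + 1 * ‖uk - uk1‖ := by
          rw [norm_smul, norm_smul]
          gcongr
          · rw [Real.norm_eq_abs, abs_le]; constructor <;> [linarith [hτ.2]; linarith [hτ.1]]
          · rw [Real.norm_eq_abs, abs_le]; constructor <;> [linarith [hσ.1]; linarith [hσ.2]]
      _ ≤ ‖xk1 - yk1‖ + ‖uk - xk‖ + ‖uk - uk1‖ := by
          rw [one_mul, one_mul, hyu, norm_smul, Real.norm_eq_abs,
            abs_of_nonneg (div_nonneg hAk hA1.le)]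
          have h1 : Ak / Ak1 ≤ 1 := by
            rw [div_le_one hA1]; linarith
          have h2 : ‖xk - uk‖ = ‖uk - xk‖ := norm_sub_rev _ _
          nlinarith [norm_nonneg (xk - uk)]
  -- strong convexity bounds
  have hbnn : 0 ≤ breg φ uk uk1 := le_trans (by positivity) (hstrong uk uk1)
  have hw2 : ‖w‖ ^ 2 ≤ 2 / μφ * breg φ uk uk1 := by
    have := hstrong uk uk1
    have hww : ‖uk1 - uk‖ = ‖w‖ := by rw [hwdef, norm_sub_rev]
    rw [hww] at this
    rw [div_mul_eq_mul_div, le_div_iff₀ hμ]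
    nlinarith
  -- Hessian perturbation bound
  have hkey : ⟪B ξ w, w⟫ - ⟪B η w, w⟫ ≤ H * d * ‖w‖ ^ 2 := by
    have h3 : ⟪B ξ w, w⟫ - ⟪B η w, w⟫ = ⟪(B ξ - B η) w, w⟫ := by
      rw [ContinuousLinearMap.sub_apply, inner_sub_left]
    rw [h3]
    calc ⟪(B ξ - B η) w, w⟫ ≤ ‖(B ξ - B η) w‖ * ‖w‖ := real_inner_le_norm _ _
      _ ≤ (‖B ξ - B η‖ * ‖w‖) * ‖w‖ := by
          gcongr; exact (B ξ - B η).le_opNorm w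
      _ ≤ ((H * ‖ξ - η‖) * ‖w‖) * ‖w‖ := by gcongr; exact hHess ξ η
      _ ≤ ((H * d) * ‖w‖) * ‖w‖ := by gcongr
      _ = H * d * ‖w‖ ^ 2 := by ring
  -- put it all together
  have hr2 : αk1 ^ 2 / Ak1 ^ 2 = r ^ 2 := by rw [hrdef, div_pow]
  rw [hr2, e₁]
  have hgoal : ‖xk1 - yk1‖ + ‖uk - xk‖ + ‖w‖ = d := by rw [hddef, hwdef]
  rw [hgoal]
  have hmain : 1/2 * ⟪B ξ w, w⟫ ≤ breg φ uk uk1 * (1 + H * d / μφ) := by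
    have h4 : 1/2 * ⟪B ξ w, w⟫ ≤ breg φ uk uk1 + 1/2 * (H * d * ‖w‖ ^ 2) := by
      rw [e₂]; linarith [hkey]
    have h5 : H * d * ‖w‖ ^ 2 ≤ H * d * (2 / μφ * breg φ uk uk1) :=
      mul_le_mul_of_nonneg_left hw2 (mul_nonneg hH hd0)
    calc 1/2 * ⟪B ξ w, w⟫ ≤ breg φ uk uk1 + 1/2 * (H * d * ‖w‖ ^ 2) := h4
      _ ≤ breg φ uk uk1 + 1/2 * (H * d * (2 / μφ * breg φ uk uk1)) := by linarith
      _ = breg φ uk uk1 * (1 + H * d / μφ) := by field_simp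
  calc r ^ 2 * (1/2 * ⟪B ξ w, w⟫) ≤ r ^ 2 * (breg φ uk uk1 * (1 + H * d / μφ)) := by
        apply mul_le_mul_of_nonneg_left hmain (by positivity)
    _ = r ^ 2 * breg φ uk uk1 * (1 + H * d / μφ) := by ring
end

section
/- Let a, b > 0 and consider for A ≥ 0 the largest root α of the quadratic M α² = (A + α)(1 + A s) with M > 0, s ≥ 0 (so A_{+} = A + α). Then α ≥ (1/(2M))(1 + A s) + √(A(1 + A s)/M), and consequently A_{+} ≥ A(1 + √(s/(4M)))² whenever A > 0. -/
theorem stmt18 (M s A α : ℝ) (hM : 0 < M) (hs : 0 ≤ s) (hA : 0 ≤ A)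
    -- α is a root of the quadratic M α² = (A + α)(1 + A s)
    (hroot : M * α ^ 2 = (A + α) * (1 + A * s))
    -- α is the largest such root
    (hlargest : ∀ β : ℝ, M * β ^ 2 = (A + β) * (1 + A * s) → β ≤ α) :
    α ≥ 1 / (2 * M) * (1 + A * s) + Real.sqrt (A * (1 + A * s) / M) ∧
    (0 < A → A + α ≥ A * (1 + Real.sqrt (s / (4 * M))) ^ 2) := by
  set c : ℝ := 1 + A * s with hc
  have hc0 : 0 < c := by positivity
  set D : ℝ := c ^ 2 + 4 * M * A * c with hD
  have hD0 : 0 ≤ D := by positivity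
  have hsqD : Real.sqrt D ^ 2 = D := Real.sq_sqrt hD0
  set β₀ : ℝ := (c + Real.sqrt D) / (2 * M) with hβ₀
  have hβroot : M * β₀ ^ 2 = (A + β₀) * c := by
    rw [hβ₀]
    field_simp
    nlinarith [hsqD]
  have hαβ : β₀ ≤ α := hlargest β₀ hβroot
  -- √(Ac/M) = √(4MAc)/(2M)
  have hkey : Real.sqrt (A * c / M) = Real.sqrt (4 * M * A * c) / (2 * M) := by
    have h1 : A * c / M = (4 * M * A * c) / ((2 * M) ^ 2) := by
      field_simp; ring
    rw [h1, Real.sqrt_div (by positivity), Real.sqrt_sq (by positivity)]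
  have hle : Real.sqrt (4 * M * A * c) ≤ Real.sqrt D := by
    apply Real.sqrt_le_sqrt
    nlinarith
  have hmain : α ≥ 1 / (2 * M) * c + Real.sqrt (A * c / M) := by
    rw [hkey]
    have heq : 1 / (2 * M) * c + Real.sqrt (4 * M * A * c) / (2 * M)
        = (c + Real.sqrt (4 * M * A * c)) / (2 * M) := by ring
    rw [heq]
    have : (c + Real.sqrt (4 * M * A * c)) / (2 * M) ≤ β₀ := by
      rw [hβ₀]
      gcongr
    linarith
  refine ⟨hmain, fun hApos => ?_⟩
  have ht : Real.sqrt (s / (4 * M)) ^ 2 = s / (4 * M) := Real.sq_sqrt (by positivity)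
  have ht0 : 0 ≤ Real.sqrt (s / (4 * M)) := Real.sqrt_nonneg _
  have h2 : 2 * A * Real.sqrt (s / (4 * M)) ≤ Real.sqrt (A * c / M) := by
    rw [show Real.sqrt (A * c / M) = Real.sqrt (A * c / M) from rfl]
    have hx : 0 ≤ 2 * A * Real.sqrt (s / (4 * M)) := by positivity
    rw [Real.le_sqrt hx (by positivity)]
    have : (2 * A * Real.sqrt (s / (4 * M))) ^ 2 = 4 * A ^ 2 * (s / (4 * M)) := by
      rw [mul_pow, mul_pow, ht]; ring
    rw [this]
    have h4 : 4 * A ^ 2 * (s / (4 * M)) = A ^ 2 * s / M := by field_simp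
    rw [h4, div_le_div_iff₀ hM hM, hc]
    nlinarith [mul_pos hApos hM, mul_nonneg (mul_nonneg (mul_nonneg hA hA) hs) hM.le]
  have h3 : A * s / (4 * M) ≤ 1 / (2 * M) * c := by
    rw [hc, div_le_iff₀ (by positivity)]
    have : 1 / (2 * M) * (1 + A * s) * (4 * M) = 2 * (1 + A * s) := by
      field_simp; ring
    rw [this]
    nlinarith
  have hexp : A * (1 + Real.sqrt (s / (4 * M))) ^ 2
      = A + 2 * A * Real.sqrt (s / (4 * M)) + A * (s / (4 * M)) := by
    have : (1 + Real.sqrt (s / (4 * M))) ^ 2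
        = 1 + 2 * Real.sqrt (s / (4 * M)) + Real.sqrt (s / (4 * M)) ^ 2 := by ring
    rw [this, ht]; ring
  rw [hexp]
  have : A * (s / (4 * M)) = A * s / (4 * M) := by ring
  rw [this]
  linarith
end
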